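/- arXiv:0903.4435 — 5 statements merged into one kernel-verified Lean document; each statement's English description precedes it below -/
import Mathlib

section
/- If G is a chordal graph and T is a clique tree of G, then a set S of vertices is a minimal separator of G if and only if S = C_i ∩ C_j for some edge (C_i, C_j) of T. -/
/-- A graph is chordal if every cycle of length greater than 3 has a chord. -/
def IsChordal {V : Type*} (G : SimpleGraph V) : Prop :=
  ∀ (u : V) (c : G.Walk u u), c.IsCycle → 3 < c.length →
    ∃ x y, x ∈ c.support ∧ y ∈ c.support ∧ G.Adj x y ∧ s(x, y) ∉ c.edges

/-- A maximal clique: a clique not properly contained in any other clique. -/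
def IsMaximalClique {V : Type*} (G : SimpleGraph V) (s : Set V) : Prop :=
  G.IsClique s ∧ ∀ t : Set V, G.IsClique t → s ⊆ t → s = t

/-- `S` separates `u` from `v` in `G`. -/
def Separates {V : Type*} (G : SimpleGraph V) (S : Set V) (u v : V) : Prop :=
  u ∉ S ∧ v ∉ S ∧ u ≠ v ∧ ∀ p : G.Walk u v, ∃ x ∈ p.support, x ∈ S

/-- `S` is a minimal separator of `G`. -/
def IsMinimalSeparator {V : Type*} (G : SimpleGraph V) (S : Set V) : Prop :=
  ∃ u v : V, Separates G S u v ∧ ∀ S' ⊆ S, Separates G S' u v → S' = S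

/-!
Removing an edge `{Cᵢ, Cⱼ}` splits the clique tree into two sides. A vertex lying in cliques on
both sides lies in `Cᵢ ∩ Cⱼ`, because the cliques containing it form a subtree; as every edge of
`G` lies in some maximal clique, every walk of `G` from one side to the other therefore meets
`Cᵢ ∩ Cⱼ`. For `u ∈ Cᵢ \ Cⱼ` and `v ∈ Cⱼ \ Cᵢ` this separator is minimal, since each of its
vertices is adjacent to both `u` and `v`. Conversely, if `S` is a minimal `u`–`v` separator, walk
along the tree path from a clique containing `u` to one containing `v`: if every clique
intersection along the path left a vertex outside `S`, one could go from `u` to `v` avoiding `S`.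
So some edge of the path has `Cᵢ ∩ Cⱼ ⊆ S`, that intersection already separates `u` from `v`, and
minimality gives equality.
-/

open SimpleGraph

namespace SimpleGraph

variable {α : Type*} {T : SimpleGraph α} {a b x y : α}

lemma Walk.mem_of_mem_support_map_induce {s : Set α} {c d : s} (p : (T.induce s).Walk c d)
    {z : α} (hz : z ∈ (p.map (Embedding.induce s).toHom).support) : z ∈ s := by
  rw [Walk.support_map, List.mem_map] at hz
  obtain ⟨z, -, rfl⟩ := hz
  exact z.2

lemma Preconnected.reachable_deleteEdges_or (hT : T.Preconnected) (a b x : α) :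
    (T.deleteEdges {s(a, b)}).Reachable x a ∨ (T.deleteEdges {s(a, b)}).Reachable x b := by
  obtain ⟨p⟩ := hT x a
  induction p with
  | nil => exact Or.inl .rfl
  | @cons x y a hxy _ ih =>
    by_cases he : s(x, y) = s(a, b)
    · rcases Sym2.eq_iff.mp he with ⟨rfl, -⟩ | ⟨rfl, -⟩
      exacts [Or.inl .rfl, Or.inr .rfl]
    · have hxy' : (T.deleteEdges {s(a, b)}).Adj x y := by simp [hxy, he]
      exact ih.imp hxy'.reachable.trans hxy'.reachable.trans

lemma Walk.IsPath.reachable_deleteEdges_of_mem_darts {p : T.Walk x y} (hp : p.IsPath)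
    {d : T.Dart} (hd : d ∈ p.darts) :
    (T.deleteEdges {d.edge}).Reachable x d.fst ∧ (T.deleteEdges {d.edge}).Reachable d.snd y := by
  induction p with
  | nil => simp at hd
  | @cons x z y hxz q ih =>
    have hq : s(x, z) ∉ q.edges := (List.nodup_cons.mp (hp.isTrail.edges_nodup)).1
    rw [Walk.darts_cons, List.mem_cons] at hd
    rcases hd with rfl | hd
    · exact ⟨.rfl, ⟨q.toDeleteEdge _ hq⟩⟩
    · refine ⟨?_, (ih hp.of_cons hd).2⟩
      have hne : s(x, z) ≠ d.edge := fun h => hq (h ▸ List.mem_map_of_mem hd)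
      have hxz' : (T.deleteEdges {d.edge}).Adj x z := by simp [hxz, hne]
      exact hxz'.reachable.trans (ih hp.of_cons hd).1

lemma IsAcyclic.mem_of_induce_preconnected (hT : T.IsAcyclic) (hab : T.Adj a b) {s : Set α}
    (hs : (T.induce s).Preconnected) (hx : x ∈ s) (hy : y ∈ s)
    (hxa : (T.deleteEdges {s(a, b)}).Reachable x a)
    (hyb : (T.deleteEdges {s(a, b)}).Reachable y b) : a ∈ s ∧ b ∈ s := by
  obtain ⟨q⟩ := hs ⟨x, hx⟩ ⟨y, hy⟩
  set p := q.map (Embedding.induce s).toHom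
  by_cases he : s(a, b) ∈ p.edges
  · exact ⟨q.mem_of_mem_support_map_induce (p.fst_mem_support_of_mem_edges he),
      q.mem_of_mem_support_map_induce (p.snd_mem_support_of_mem_edges he)⟩
  · have hxy : (T.deleteEdges {s(a, b)}).Reachable x y := ⟨p.toDeleteEdge _ he⟩
    exact (isAcyclic_iff_forall_adj_isBridge.mp hT hab (hxa.symm.trans (hxy.trans hyb))).elim

lemma IsClique.reachable_induce {C s : Set α} (hC : T.IsClique C) (ha : a ∈ C) (hb : b ∈ C)
    (has : a ∈ s) (hbs : b ∈ s) : (T.induce s).Reachable ⟨a, has⟩ ⟨b, hbs⟩ := by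
  by_cases hab : a = b
  · subst hab; rfl
  · exact Adj.reachable (hC ha hb hab)

end SimpleGraph

section

variable {V : Type*} {G : SimpleGraph V} {S : Set V} {u v w : V}

lemma Separates.mem_of_adj_of_adj (h : Separates G S u v) (huw : G.Adj u w) (hwv : G.Adj w v) :
    w ∈ S := by
  obtain ⟨z, hz, hzS⟩ := h.2.2.2 (.cons huw (.cons hwv .nil))
  simp only [Walk.support_cons, Walk.support_nil, List.mem_cons, List.not_mem_nil,
    or_false] at hz
  rcases hz with rfl | rfl | rfl
  exacts [absurd hzS h.1, hzS, absurd hzS h.2.1]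

lemma Separates.not_reachable_induce_compl (h : Separates G S u v) :
    ¬ (G.induce Sᶜ).Reachable ⟨u, h.1⟩ ⟨v, h.2.1⟩ := by
  rintro ⟨q⟩
  obtain ⟨z, hz, hzS⟩ := h.2.2.2 (q.map (Embedding.induce Sᶜ).toHom)
  exact q.mem_of_mem_support_map_induce hz hzS

lemma exists_isMaximalClique_superset {s : Set V} (hs : G.IsClique s) :
    ∃ C, IsMaximalClique G C ∧ s ⊆ C := by
  obtain ⟨C, hsC, hC⟩ := zorn_subset_nonempty {t | G.IsClique t}
    (fun c hc hchain _ => ⟨⋃₀ c, (isClique_sUnion hchain.directedOn).mpr hc,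
      fun _ => Set.subset_sUnion_of_mem⟩) s hs
  exact ⟨C, ⟨hC.1, fun t ht hCt => hCt.antisymm (hC.2 ht hCt)⟩, hsC⟩

end

section CliqueTree

variable {V : Type*} {G : SimpleGraph V} {T : SimpleGraph {C : Set V // IsMaximalClique G C}}
  {Ci Cj C D : {C : Set V // IsMaximalClique G C}} {S : Set V} {u v : V}

lemma mem_inter_of_reachable_deleteEdges (hT : T.IsAcyclic)
    (hconn : ∀ v : V, (T.induce {C | v ∈ C.1}).Connected) (hadj : T.Adj Ci Cj)
    (hC : (T.deleteEdges {s(Ci, Cj)}).Reachable C Ci)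
    (hD : (T.deleteEdges {s(Ci, Cj)}).Reachable D Cj) (hvC : v ∈ C.1) (hvD : v ∈ D.1) :
    v ∈ Ci.1 ∩ Cj.1 :=
  hT.mem_of_induce_preconnected hadj (hconn v).preconnected hvC hvD hC hD

lemma SimpleGraph.Walk.exists_mem_support_inter_of_reachable_deleteEdges (hT : T.IsTree)
    (hconn : ∀ v : V, (T.induce {C | v ∈ C.1}).Connected) (hadj : T.Adj Ci Cj)
    (hC : (T.deleteEdges {s(Ci, Cj)}).Reachable C Ci)
    (hD : (T.deleteEdges {s(Ci, Cj)}).Reachable D Cj) (p : G.Walk u v) (hu : u ∈ C.1)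
    (hv : v ∈ D.1) : ∃ z ∈ p.support, z ∈ Ci.1 ∩ Cj.1 := by
  induction p generalizing C with
  | nil =>
    exact ⟨_, Walk.start_mem_support _,
      mem_inter_of_reachable_deleteEdges hT.isAcyclic hconn hadj hC hD hu hv⟩
  | @cons u w v huw q ih =>
    obtain ⟨E, hE, huwE⟩ := exists_isMaximalClique_superset (isClique_pair.mpr fun _ => huw)
    rcases hT.connected.preconnected.reachable_deleteEdges_or Ci Cj ⟨E, hE⟩ with hECi | hECj
    · obtain ⟨z, hz, hzS⟩ := ih hECi (huwE (by simp)) hv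
      exact ⟨z, List.mem_cons_of_mem _ hz, hzS⟩
    · exact ⟨u, Walk.start_mem_support _,
        mem_inter_of_reachable_deleteEdges hT.isAcyclic hconn hadj hC hECj hu (huwE (by simp))⟩

lemma separates_inter_of_reachable_deleteEdges (hT : T.IsTree)
    (hconn : ∀ v : V, (T.induce {C | v ∈ C.1}).Connected) (hadj : T.Adj Ci Cj)
    (hC : (T.deleteEdges {s(Ci, Cj)}).Reachable C Ci)
    (hD : (T.deleteEdges {s(Ci, Cj)}).Reachable D Cj) (hu : u ∈ C.1) (hv : v ∈ D.1)
    (huS : u ∉ Ci.1 ∩ Cj.1) (hvS : v ∉ Ci.1 ∩ Cj.1) (huv : u ≠ v) :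
    Separates G (Ci.1 ∩ Cj.1) u v :=
  ⟨huS, hvS, huv, fun p =>
    p.exists_mem_support_inter_of_reachable_deleteEdges hT hconn hadj hC hD hu hv⟩

lemma SimpleGraph.Walk.exists_mem_darts_inter_subset (p : T.Walk C D) (hu : u ∈ C.1)
    (hv : v ∈ D.1) (huS : u ∉ S) (hvS : v ∉ S) (huv : ¬ (G.induce Sᶜ).Reachable ⟨u, huS⟩ ⟨v, hvS⟩) :
    ∃ d ∈ p.darts, d.fst.1 ∩ d.snd.1 ⊆ S := by
  induction p generalizing u with
  | @nil C => exact (huv (C.2.1.reachable_induce hu hv huS hvS)).elim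
  | @cons C E D hCE q ih =>
    by_cases hCE_S : C.1 ∩ E.1 ⊆ S
    · exact ⟨⟨(C, E), hCE⟩, List.mem_cons_self .., hCE_S⟩
    · obtain ⟨w, hw, hwS⟩ := Set.not_subset.mp hCE_S
      have huw := C.2.1.reachable_induce (s := Sᶜ) hu hw.1 huS hwS
      obtain ⟨d, hd, hdS⟩ := ih hw.2 hv hwS fun hwv => huv (huw.trans hwv)
      exact ⟨d, List.mem_cons_of_mem _ hd, hdS⟩

lemma exists_adj_eq_inter_of_isMinimalSeparator (hT : T.IsTree)
    (hconn : ∀ v : V, (T.induce {C | v ∈ C.1}).Connected) (hS : IsMinimalSeparator G S) :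
    ∃ Ci Cj : {C : Set V // IsMaximalClique G C}, T.Adj Ci Cj ∧ S = Ci.1 ∩ Cj.1 := by
  obtain ⟨u, v, hsep, hmin⟩ := hS
  obtain ⟨Cu, hCu, huCu⟩ := exists_isMaximalClique_superset (G.isClique_singleton u)
  obtain ⟨Cv, hCv, hvCv⟩ := exists_isMaximalClique_superset (G.isClique_singleton v)
  obtain ⟨p, hp⟩ := (hT.connected.preconnected ⟨Cu, hCu⟩ ⟨Cv, hCv⟩).exists_isPath
  obtain ⟨d, hd, hdS⟩ := p.exists_mem_darts_inter_subset (huCu rfl) (hvCv rfl) hsep.1 hsep.2.1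
    hsep.not_reachable_induce_compl
  obtain ⟨hCud, hCvd⟩ := hp.reachable_deleteEdges_of_mem_darts hd
  have hdsep := separates_inter_of_reachable_deleteEdges hT hconn d.adj hCud hCvd.symm
    (huCu rfl) (hvCv rfl) (fun h => hsep.1 (hdS h)) (fun h => hsep.2.1 (hdS h)) hsep.2.2.1
  exact ⟨d.fst, d.snd, d.adj, (hmin _ hdS hdsep).symm⟩

lemma isMinimalSeparator_inter_of_adj (hT : T.IsTree)
    (hconn : ∀ v : V, (T.induce {C | v ∈ C.1}).Connected) (hadj : T.Adj Ci Cj) :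
    IsMinimalSeparator G (Ci.1 ∩ Cj.1) := by
  obtain ⟨u, huCi, huCj⟩ := Set.not_subset.mp fun h => hadj.ne (Subtype.ext (Ci.2.2 _ Cj.2.1 h))
  obtain ⟨v, hvCj, hvCi⟩ :=
    Set.not_subset.mp fun h => hadj.ne (Subtype.ext (Cj.2.2 _ Ci.2.1 h)).symm
  refine ⟨u, v, separates_inter_of_reachable_deleteEdges hT hconn hadj .rfl .rfl huCi hvCj
    (fun h => huCj h.2) (fun h => hvCi h.1) (fun h => huCj (h ▸ hvCj)), fun S' hS' hsep => ?_⟩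
  refine hS'.antisymm fun w hw => hsep.mem_of_adj_of_adj ?_ ?_
  · exact Ci.2.1 huCi hw.1 fun h => huCj (h ▸ hw.2)
  · exact Cj.2.1 hw.2 hvCj fun h => hvCi (h ▸ hw.1)

end CliqueTree

theorem minimalSeparator_iff_cliqueTree_edge_inter_general {V : Type*}
    (G : SimpleGraph V)
    (T : SimpleGraph {C : Set V // IsMaximalClique G C}) (hT : T.IsTree)
    (hconn : ∀ v : V, (T.induce {C | v ∈ C.1}).Connected) (S : Set V) :
    IsMinimalSeparator G S ↔
      ∃ Ci Cj : {C : Set V // IsMaximalClique G C}, T.Adj Ci Cj ∧ S = Ci.1 ∩ Cj.1 := by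
  refine ⟨exists_adj_eq_inter_of_isMinimalSeparator hT hconn, ?_⟩
  rintro ⟨Ci, Cj, hadj, rfl⟩
  exact isMinimalSeparator_inter_of_adj hT hconn hadj

/-- Ho–Lee: if `G` is chordal and `T` is a clique tree of `G` (a tree on the maximal
cliques of `G` such that for every vertex `v` the maximal cliques containing `v`
induce a connected subtree of `T`), then `S` is a minimal separator of `G` iff
`S = Cᵢ ∩ Cⱼ` for some edge `(Cᵢ, Cⱼ)` of `T`. -/
theorem minimalSeparator_iff_cliqueTree_edge_inter {V : Type*} [Fintype V]
    (G : SimpleGraph V) (hG : IsChordal G)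
    (T : SimpleGraph {C : Set V // IsMaximalClique G C}) (hT : T.IsTree)
    (hconn : ∀ v : V, (T.induce {C | v ∈ C.1}).Connected) (S : Set V) :
    IsMinimalSeparator G S ↔
      ∃ Ci Cj : {C : Set V // IsMaximalClique G C}, T.Adj Ci Cj ∧ S = Ci.1 ∩ Cj.1 :=
  minimalSeparator_iff_cliqueTree_edge_inter_general G T hT hconn S
end

section
/- A graph G is chordal if and only if G is the intersection graph of a family of subtrees of a tree. -/
/-!
Subtrees of a tree have the Helly property: pairwise intersecting subtrees share a node (for
three of them, the path inside the first one between its meeting points with the other two is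
covered by those two, so it passes through their intersection). Hence a chordless cycle
`v₀ v₁ … vₙ₋₁` with `n ≥ 4` has no subtree representation: the union of the subtrees of `v₀` and
`v₁`, the union of those of `v₂, …, vₙ₋₂`, and the subtree of `vₙ₋₁` pairwise meet, and a common
node gives a chord `v₀vᵢ` with `2 ≤ i ≤ n - 2` or the chord `v₁vₙ₋₁`.

Conversely, a minimal vertex separator of a chordal graph is a clique: a non-edge `xy` inside
it would close up chordless `x`-`y` paths through two sides of the separator into a chordless
cycle. Passing by induction to one side plus the separator, choosing the side that avoids a
given clique, yields a simplicial vertex `v` outside that clique (Dirac). Represent `G - v` by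
induction; the subtrees of the neighbours of `v` pairwise meet, so they share a node `t`, and
`v` is represented by a new leaf hung at `t`, which is also added to the subtrees of the
neighbours of `v`.
-/

namespace SimpleGraph

variable {V W ι : Type*} {G : SimpleGraph V}

variable (G) in
structure IsSubtreeRepresentation (T : SimpleGraph ι) (f : V → Set ι) : Prop where
  connected (v : V) : (T.induce (f v)).Connected
  adj_iff ⦃u v : V⦄ : u ≠ v → (G.Adj u v ↔ (f u ∩ f v).Nonempty)

lemma IsAcyclic.support_subset_of_isPath (hG : G.IsAcyclic) {u v : V} {p : G.Walk u v}
    (hp : p.IsPath) (q : G.Walk u v) : p.support ⊆ q.support := by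
  classical
  obtain rfl : p = q.bypass := congrArg Subtype.val
    ((hG.subsingleton_path u v).elim ⟨p, hp⟩ ⟨q.bypass, q.bypass_isPath⟩)
  exact q.support_bypass_subset_support

lemma IsAcyclic.edges_subset_of_isPath (hG : G.IsAcyclic) {u v : V} {p : G.Walk u v}
    (hp : p.IsPath) (q : G.Walk u v) : p.edges ⊆ q.edges := by
  classical
  obtain rfl : p = q.bypass := congrArg Subtype.val
    ((hG.subsingleton_path u v).elim ⟨p, hp⟩ ⟨q.bypass, q.bypass_isPath⟩)
  exact q.edges_bypass_subset_edges

lemma Connected.exists_walk_of_induce {s : Set V} (hs : (G.induce s).Connected) {x y : V}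
    (hx : x ∈ s) (hy : y ∈ s) : ∃ p : G.Walk x y, ∀ z ∈ p.support, z ∈ s := by
  obtain ⟨p⟩ := hs ⟨x, hx⟩ ⟨y, hy⟩
  have hp : ∀ z ∈ (p.map (Embedding.induce s).toHom).support, z ∈ s := by
    simp only [Walk.support_map, List.mem_map]
    rintro _ ⟨z, -, rfl⟩
    exact z.2
  exact ⟨_, hp⟩

lemma IsAcyclic.mem_of_isPath {s : Set V} (hG : G.IsAcyclic) (hs : (G.induce s).Connected)
    {x y : V} (hx : x ∈ s) (hy : y ∈ s) {p : G.Walk x y} (hp : p.IsPath) :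
    ∀ z ∈ p.support, z ∈ s := by
  obtain ⟨q, hq⟩ := hs.exists_walk_of_induce hx hy
  exact fun z hz => hq z (hG.support_subset_of_isPath hp q hz)

lemma IsAcyclic.induce_inter_connected {s t : Set V} (hG : G.IsAcyclic)
    (hs : (G.induce s).Connected) (ht : (G.induce t).Connected) (hst : (s ∩ t).Nonempty) :
    (G.induce (s ∩ t)).Connected := by
  classical
  obtain ⟨x, hx⟩ := hst
  refine induce_connected_of_patches x hx fun {y} hy => ⟨s ∩ t, subset_rfl, hx, hy, ?_⟩
  obtain ⟨q, -⟩ := hs.exists_walk_of_induce hx.1 hy.1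
  have hsub : ∀ z ∈ q.bypass.support, z ∈ s ∩ t := fun z hz =>
    ⟨hG.mem_of_isPath hs hx.1 hy.1 q.bypass_isPath z hz,
      hG.mem_of_isPath ht hx.2 hy.2 q.bypass_isPath z hz⟩
  exact ⟨q.bypass.induce _ hsub⟩

lemma IsAcyclic.inter_inter_nonempty {s t u : Set V} (hG : G.IsAcyclic)
    (hs : (G.induce s).Connected) (ht : (G.induce t).Connected) (hu : (G.induce u).Connected)
    (hst : (s ∩ t).Nonempty) (htu : (t ∩ u).Nonempty) (hsu : (s ∩ u).Nonempty) :
    (s ∩ t ∩ u).Nonempty := by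
  classical
  obtain ⟨a, has, hat⟩ := hst
  obtain ⟨b, hbt, hbu⟩ := htu
  obtain ⟨c, hcs, hcu⟩ := hsu
  obtain ⟨pab, hpab⟩ := ht.exists_walk_of_induce hat hbt
  obtain ⟨pbc, hpbc⟩ := hu.exists_walk_of_induce hbu hcu
  obtain ⟨pac, hpac⟩ := hs.exists_walk_of_induce has hcs
  by_contra hne
  by_cases hau : a ∈ u
  · exact hne ⟨a, ⟨has, hat⟩, hau⟩
  -- the path from `a` to `c` inside `s` runs along `pab` and `pbc`; where it enters `u`
  -- it must already be in `t`
  obtain ⟨d, hd, hd₁, hd₂⟩ :=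
    pac.bypass.exists_boundary_dart {x | x ∉ u} hau (by simpa using hcu)
  have hde : d.edge ∈ (pab.append pbc).edges :=
    hG.edges_subset_of_isPath pac.bypass_isPath _ (List.mem_map_of_mem hd)
  rw [Walk.edges_append, List.mem_append] at hde
  rcases hde with hde | hde
  · have hds : d.snd ∈ s :=
      hpac _ (pac.support_bypass_subset_support (pac.bypass.dart_snd_mem_support_of_mem_darts hd))
    exact hne ⟨d.snd, ⟨hds, hpab _ (pab.snd_mem_support_of_mem_edges hde)⟩, by simpa using hd₂⟩
  · exact hd₁ (hpbc _ (pbc.fst_mem_support_of_mem_edges hde))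

lemma IsAcyclic.exists_mem_of_pairwise_inter_nonempty {κ : Type*} (hG : G.IsAcyclic)
    {S : κ → Set V} {s : Finset κ} (hs : s.Nonempty)
    (hS : ∀ i ∈ s, (G.induce (S i)).Connected)
    (hSS : ∀ i ∈ s, ∀ j ∈ s, i ≠ j → (S i ∩ S j).Nonempty) : ∃ x, ∀ i ∈ s, x ∈ S i := by
  classical
  induction hs using Finset.Nonempty.cons_induction generalizing S with
  | singleton i =>
    obtain ⟨⟨x, hx⟩⟩ := (hS i (Finset.mem_singleton_self i)).nonempty
    exact ⟨x, by simpa using hx⟩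
  | cons i s hi hs ih =>
    have hmem {j : κ} (hj : j ∈ s) : j ∈ Finset.cons i s hi := Finset.mem_cons_of_mem hj
    have hSi := hS i (Finset.mem_cons_self i s)
    have hiS {j : κ} (hj : j ∈ s) : (S j ∩ S i).Nonempty :=
      hSS j (hmem hj) i (Finset.mem_cons_self i s) (ne_of_mem_of_not_mem hj hi)
    obtain ⟨x, hx⟩ := ih (S := fun j => S j ∩ S i)
      (fun j hj => hG.induce_inter_connected (hS j (hmem hj)) hSi (hiS hj))
      (fun j hj k hk hjk => by
        obtain ⟨x, ⟨hxj, hxk⟩, hxi⟩ := hG.inter_inter_nonempty (hS j (hmem hj))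
          (hS k (hmem hk)) hSi (hSS j (hmem hj) k (hmem hk) hjk) (hiS hk) (hiS hj)
        exact ⟨x, ⟨hxj, hxi⟩, hxk, hxi⟩)
    obtain ⟨j, hj⟩ := hs
    refine ⟨x, fun k hk => ?_⟩
    rcases Finset.mem_cons.1 hk with rfl | hk
    exacts [(hx j hj).2, (hx k hk).1]

lemma induce_biUnion_Icc_connected {S : ℕ → Set V} {a b : ℕ} (hab : a ≤ b)
    (hS : ∀ i, (G.induce (S i)).Connected)
    (hstep : ∀ i, a ≤ i → i < b → (S i ∩ S (i + 1)).Nonempty) :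
    (G.induce (⋃ i ∈ Set.Icc a b, S i)).Connected := by
  induction b, hab using Nat.le_induction with
  | base => rw [Set.Icc_self, Set.biUnion_singleton]; exact hS a
  | succ b hab ih =>
    rw [← Set.insert_Icc_right_eq_Icc_add_one (by omega), Set.biUnion_insert, Set.union_comm]
    obtain ⟨x, hxb, hxb'⟩ := hstep b hab (by omega)
    exact induce_union_connected (ih fun i hi hib => hstep i hi (by omega)).preconnected
      (hS _).preconnected ⟨x, Set.mem_biUnion (x := b) ⟨hab, le_rfl⟩ hxb, hxb'⟩

lemma IsAcyclic.inter_nonempty_or_inter_nonempty {A B C D : Set V} (hG : G.IsAcyclic)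
    (hA : (G.induce A).Connected) (hB : (G.induce B).Connected)
    (hC : (G.induce C).Connected) (hD : (G.induce D).Connected)
    (hAB : (A ∩ B).Nonempty) (hBC : (B ∩ C).Nonempty) (hCD : (C ∩ D).Nonempty)
    (hDA : (D ∩ A).Nonempty) : (A ∩ C).Nonempty ∨ (B ∩ D).Nonempty := by
  rw [Set.inter_comm] at hDA
  obtain ⟨x, ⟨hxAB, hxC⟩, hxD⟩ := hG.inter_inter_nonempty
    (induce_union_connected hA.preconnected hB.preconnected hAB) hC hD
    (hBC.mono (Set.inter_subset_inter_left _ Set.subset_union_right)) hCD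
    (hDA.mono (Set.inter_subset_inter_left _ Set.subset_union_left))
  rcases hxAB with hxA | hxB
  · exact Or.inl ⟨x, hxA, hxC⟩
  · exact Or.inr ⟨x, hxB, hxD⟩

lemma IsAcyclic.exists_inter_nonempty_of_cyclic {S : ℕ → Set V} {n : ℕ} (hG : G.IsAcyclic)
    (hn : 4 ≤ n) (hS : ∀ i, (G.induce (S i)).Connected)
    (hstep : ∀ i < n, (S i ∩ S (i + 1)).Nonempty) (hwrap : S n = S 0) :
    ∃ i j, i + 2 ≤ j ∧ j + 2 ≤ n + i ∧ j < n ∧ (S i ∩ S j).Nonempty := by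
  have hmid := induce_biUnion_Icc_connected (G := G) (S := S) (by omega : 2 ≤ n - 2) hS
    fun i _ hi => hstep i (by omega)
  have h12 : (S 1 ∩ ⋃ i ∈ Set.Icc 2 (n - 2), S i).Nonempty := by
    obtain ⟨x, hx1, hx2⟩ := hstep 1 (by omega)
    exact ⟨x, hx1, Set.mem_biUnion (x := 2) ⟨le_rfl, by omega⟩ hx2⟩
  have hlast : ((⋃ i ∈ Set.Icc 2 (n - 2), S i) ∩ S (n - 1)).Nonempty := by
    obtain ⟨x, hx1, hx2⟩ := hstep (n - 2) (by omega)
    exact ⟨x, Set.mem_biUnion (x := n - 2) ⟨by omega, le_rfl⟩ hx1,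
      by rwa [show n - 2 + 1 = n - 1 by omega] at hx2⟩
  have hwrap' : (S (n - 1) ∩ S 0).Nonempty := by
    simpa [show n - 1 + 1 = n by omega, hwrap] using hstep (n - 1) (by omega)
  rcases hG.inter_nonempty_or_inter_nonempty (hS 0) (hS 1) hmid (hS (n - 1))
    (hstep 0 (by omega)) h12 hlast hwrap' with ⟨x, hx0, hx⟩ | h
  · obtain ⟨j, ⟨hj₂, hjn⟩, hxj⟩ := Set.mem_iUnion₂.mp hx
    exact ⟨0, j, hj₂, by omega, by omega, x, hx0, hxj⟩
  · exact ⟨1, n - 1, by omega, by omega, by omega, h⟩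

namespace Walk

lemma IsCycle.getVert_eq_getVert {u : V} {c : G.Walk u u} (hc : c.IsCycle) {i j : ℕ}
    (hi : i ≤ c.length) (hj : j ≤ c.length) (h : c.getVert i = c.getVert j) :
    i = j ∨ i = 0 ∧ j = c.length ∨ i = c.length ∧ j = 0 := by
  rcases Nat.eq_zero_or_pos i with rfl | hi0
  · rw [c.getVert_zero, eq_comm, hc.getVert_endpoint_iff hj] at h
    omega
  rcases Nat.eq_zero_or_pos j with rfl | hj0
  · rw [c.getVert_zero, hc.getVert_endpoint_iff hi] at h
    omega
  exact Or.inl (hc.getVert_injOn ⟨hi0, hi⟩ ⟨hj0, hj⟩ h)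

lemma IsCycle.getVert_ne_and_notMem_edges {u : V} {c : G.Walk u u} (hc : c.IsCycle)
    {i j : ℕ} (hij : i + 2 ≤ j) (hji : j + 2 ≤ c.length + i) (hj : j < c.length) :
    c.getVert i ≠ c.getVert j ∧ s(c.getVert i, c.getVert j) ∉ c.edges := by
  refine ⟨fun h => by rcases hc.getVert_eq_getVert (by omega) hj.le h with h | h | h <;> omega,
    fun he => ?_⟩
  obtain ⟨k, hk, he⟩ := c.mk_mem_edges_iff_exists.mp he
  rw [Sym2.eq_iff] at he
  rcases he with ⟨h₁, h₂⟩ | ⟨h₁, h₂⟩ <;>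
  rcases hc.getVert_eq_getVert (by omega) (by omega) h₁ with h₁ | h₁ | h₁ <;>
  rcases hc.getVert_eq_getVert (by omega) (by omega) h₂ with h₂ | h₂ | h₂ <;> omega

lemma exists_length_lt_of_adj_getVert {u v : V} (p : G.Walk u v) {i j : ℕ} (hij : i + 1 < j)
    (hj : j ≤ p.length) (h : G.Adj (p.getVert i) (p.getVert j)) :
    ∃ q : G.Walk u v, q.length < p.length ∧ q.support ⊆ p.support := by
  refine ⟨(p.take i).append (cons h (p.drop j)), ?_, ?_⟩
  · simp only [length_append, take_length, length_cons, drop_length]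
    omega
  · rw [support_append, support_cons, List.tail_cons]
    exact List.append_subset.2
      ⟨(p.isSubwalk_take i).support_subset, (p.isSubwalk_drop j).support_subset⟩

lemma exists_isPath_isChordless {u v : V} (p : G.Walk u v) :
    ∃ q : G.Walk u v, q.IsPath ∧ q.IsChordless ∧ q.support ⊆ p.support := by
  classical
  -- a shortest walk on the vertices of `p` will do
  have hP : ∃ n, ∃ q : G.Walk u v, q.support ⊆ p.support ∧ q.length = n :=
    ⟨_, p, List.Subset.refl _, rfl⟩
  obtain ⟨q, hqp, hq⟩ := Nat.find_spec hP
  have hmin (r : G.Walk u v) (hr : r.support ⊆ p.support) : q.length ≤ r.length :=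
    hq ▸ Nat.find_min' hP ⟨r, hr, rfl⟩
  have hedge (i j : ℕ) (hij : i < j) (hj : j ≤ q.length)
      (h : G.Adj (q.getVert i) (q.getVert j)) : s(q.getVert i, q.getVert j) ∈ q.edges := by
    obtain rfl | hij := (Nat.succ_le_of_lt hij).eq_or_lt
    · exact q.mk_mem_edges_iff_exists.2 ⟨i, by omega, rfl⟩
    · obtain ⟨r, hr, hrq⟩ := q.exists_length_lt_of_adj_getVert hij hj h
      exact absurd (hmin r (List.Subset.trans hrq hqp)) (by omega)
  refine ⟨q, ?_, ?_, hqp⟩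
  · rw [← q.bypass_eq_self_of_length_le_length_bypass
      (hmin _ (List.Subset.trans q.support_bypass_subset_support hqp))]
    exact q.bypass_isPath
  · rw [isChordless_iff_forall_mem_edges]
    intro x y hx hy hxy
    obtain ⟨i, rfl, hi⟩ := mem_support_iff_exists_getVert.1 hx
    obtain ⟨j, rfl, hj⟩ := mem_support_iff_exists_getVert.1 hy
    rcases lt_trichotomy i j with hij | rfl | hij
    · exact hedge i j hij hj hxy
    · exact absurd rfl hxy.ne
    · rw [Sym2.eq_swap]
      exact hedge j i hij hi hxy.symm

end Walk

theorem IsSubtreeRepresentation.isChordal {T : SimpleGraph ι} {f : V → Set ι}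
    (hf : G.IsSubtreeRepresentation T f) (hT : T.IsAcyclic) : IsChordal G := by
  intro u c hc hlen
  by_contra! hno
  have hstep (i : ℕ) (hi : i < c.length) :
      (f (c.getVert i) ∩ f (c.getVert (i + 1))).Nonempty :=
    (hf.adj_iff (c.adj_getVert_succ hi).ne).1 (c.adj_getVert_succ hi)
  obtain ⟨i, j, hij, hji, hj, hfij⟩ := hT.exists_inter_nonempty_of_cyclic
    (S := fun i => f (c.getVert i)) hlen (fun i => hf.connected _) hstep (by simp)
  obtain ⟨hne, hnotMem⟩ := hc.getVert_ne_and_notMem_edges hij hji hj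
  exact hnotMem (hno _ _ (c.getVert_mem_support i) (c.getVert_mem_support j)
    ((hf.adj_iff hne).2 hfij))

lemma _root_.IsChordal.of_embedding {H : SimpleGraph W} (hG : IsChordal G) (f : H ↪g G) :
    IsChordal H := by
  intro u c hc hlen
  obtain ⟨x, y, hx, hy, hxy, he⟩ :=
    hG _ (c.map f.toHom) (hc.map f.injective) (by simpa using hlen)
  rw [Walk.support_map, List.mem_map] at hx hy
  obtain ⟨x, hx, rfl⟩ := hx
  obtain ⟨y, hy, rfl⟩ := hy
  refine ⟨x, y, hx, hy, f.map_adj_iff.1 hxy, fun h => he ?_⟩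
  rw [Walk.edges_map]
  exact List.mem_map_of_mem h

lemma _root_.IsChordal.adj_of_isChordless {x y : V} {A B : Set V} (hG : IsChordal G)
    (hxy : x ≠ y) (hAB : ∀ a ∈ A, ∀ b ∈ B, a ≠ b ∧ ¬G.Adj a b) {p q : G.Walk x y}
    (hp : p.IsPath) (hq : q.IsPath) (hpc : p.IsChordless) (hqc : q.IsChordless)
    (hpA : ∀ z ∈ p.support, z = x ∨ z = y ∨ z ∈ A)
    (hqB : ∀ z ∈ q.support, z = x ∨ z = y ∨ z ∈ B) :
    G.Adj x y := by
  -- otherwise `p` and `q` close up into a chordless cycle of length at least four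
  by_contra hnxy
  have hlen (r : G.Walk x y) : 2 ≤ r.length := by
    by_contra! hr
    obtain h | h : r.length = 0 ∨ r.length = 1 := by omega
    · exact hxy (r.eq_of_length_eq_zero h)
    · have := r.adj_getVert_succ (i := 0) (by omega)
      rw [Walk.getVert_zero, zero_add, ← h, Walk.getVert_length] at this
      exact hnxy this
  have hA (z : V) (hz : z ∈ p.support) (hzq : z ∉ q.support) : z ∈ A := by
    rcases hpA z hz with rfl | rfl | h
    exacts [absurd q.start_mem_support hzq, absurd q.end_mem_support hzq, h]
  have hB (z : V) (hz : z ∈ q.support) (hzp : z ∉ p.support) : z ∈ B := by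
    rcases hqB z hz with rfl | rfl | h
    exacts [absurd p.start_mem_support hzp, absurd p.end_mem_support hzp, h]
  have hdisj : p.support.tail.Disjoint q.reverse.support.tail := by
    intro z hzp hzq
    have hpx := hp.support_nodup
    have hqy := hq.reverse.support_nodup
    rw [← Walk.cons_tail_support, List.nodup_cons] at hpx hqy
    have hzA : z ∈ A := by
      rcases hpA z (List.mem_of_mem_tail hzp) with rfl | rfl | h
      exacts [absurd hzp hpx.1, absurd hzq hqy.1, h]
    have hzB : z ∈ B := by
      rcases hqB z (by simpa using List.mem_of_mem_tail hzq) with rfl | rfl | h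
      exacts [absurd hzp hpx.1, absurd hzq hqy.1, h]
    exact (hAB z hzA z hzB).1 rfl
  have hc := hp.isCycle_append hq.reverse hdisj (Or.inl (by linarith [hlen p]))
  obtain ⟨a, b, ha, hb, hab, habc⟩ :=
    hG x _ hc (by simp only [Walk.length_append, Walk.length_reverse]; linarith [hlen p, hlen q])
  simp only [Walk.mem_support_append_iff, Walk.support_reverse, List.mem_reverse] at ha hb
  simp only [Walk.edges_append, Walk.edges_reverse, List.mem_append, List.mem_reverse,
    not_or] at habc
  have hnp : ¬(a ∈ p.support ∧ b ∈ p.support) := fun h => habc.1 (hpc.mem_edges h.1 h.2 hab)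
  have hnq : ¬(a ∈ q.support ∧ b ∈ q.support) := fun h => habc.2 (hqc.mem_edges h.1 h.2 hab)
  rcases ha with ha | ha <;> rcases hb with hb | hb
  · exact hnp ⟨ha, hb⟩
  · exact (hAB a (hA a ha fun h => hnq ⟨h, hb⟩) b (hB b hb fun h => hnp ⟨ha, h⟩)).2 hab
  · exact (hAB b (hA b hb fun h => hnq ⟨ha, h⟩) a (hB a ha fun h => hnp ⟨h, hb⟩)).2
      hab.symm
  · exact hnq ⟨ha, hb⟩

variable (G) in
def reachAvoiding (S : Set V) (a : V) : Set V :=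
  {x | ∃ p : G.Walk a x, ∀ z ∈ p.support, z ∉ S}

variable (G) in
def Separates (S : Set V) (a b : V) : Prop :=
  a ∉ S ∧ b ∉ S ∧ b ∉ G.reachAvoiding S a

section Separators

variable {S : Set V} {a b x y : V}

lemma notMem_of_mem_reachAvoiding (hx : x ∈ G.reachAvoiding S a) : x ∉ S :=
  hx.elim fun p hp => hp x p.end_mem_support

lemma mem_reachAvoiding_self (ha : a ∉ S) : a ∈ G.reachAvoiding S a :=
  ⟨.nil, by simpa using ha⟩

lemma mem_reachAvoiding_of_mem_support {p : G.Walk a x} (hp : ∀ z ∈ p.support, z ∉ S)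
    {z : V} (hz : z ∈ p.support) : z ∈ G.reachAvoiding S a := by
  classical
  exact ⟨p.takeUntil z hz, fun w hw => hp w (p.support_takeUntil_subset_support hz hw)⟩

lemma mem_reachAvoiding_comm : x ∈ G.reachAvoiding S a ↔ a ∈ G.reachAvoiding S x :=
  ⟨fun ⟨p, hp⟩ => ⟨p.reverse, by simpa using hp⟩,
    fun ⟨p, hp⟩ => ⟨p.reverse, by simpa using hp⟩⟩

lemma mem_reachAvoiding_trans (hx : x ∈ G.reachAvoiding S a) (hy : y ∈ G.reachAvoiding S x) :
    y ∈ G.reachAvoiding S a := by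
  obtain ⟨p, hp⟩ := hx
  obtain ⟨q, hq⟩ := hy
  refine ⟨p.append q, fun z hz => ?_⟩
  rw [Walk.mem_support_append_iff] at hz
  exact hz.elim (hp z) (hq z)

lemma mem_reachAvoiding_of_adj (hx : x ∈ G.reachAvoiding S a) (hxy : G.Adj x y) (hy : y ∉ S) :
    y ∈ G.reachAvoiding S a :=
  mem_reachAvoiding_trans hx ⟨hxy.toWalk, by simp [notMem_of_mem_reachAvoiding hx, hy]⟩

lemma exists_walk_of_mem_reachAvoiding (hx : x ∈ G.reachAvoiding S a)
    (hy : y ∈ G.reachAvoiding S a) :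
    ∃ p : G.Walk x y, ∀ z ∈ p.support, z ∈ G.reachAvoiding S a := by
  obtain ⟨p, hp⟩ := hx
  obtain ⟨q, hq⟩ := hy
  refine ⟨p.reverse.append q, fun z hz => ?_⟩
  rw [Walk.mem_support_append_iff, Walk.support_reverse, List.mem_reverse] at hz
  exact hz.elim (mem_reachAvoiding_of_mem_support hp) (mem_reachAvoiding_of_mem_support hq)

lemma separates_comm : G.Separates S a b ↔ G.Separates S b a := by
  simp only [Separates, mem_reachAvoiding_comm (x := b)]
  tauto

lemma separates_compl_pair (hab : a ≠ b) (hnab : ¬G.Adj a b) : G.Separates {a, b}ᶜ a b := by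
  refine ⟨by simp, by simp, fun ⟨p, hp⟩ => ?_⟩
  have hnil : ¬p.Nil := fun h => hab h.eq
  have hsnd := hp _ (p.getVert_mem_support 1)
  simp only [Set.mem_compl_iff, Set.mem_insert_iff, Set.mem_singleton_iff, not_or, not_and,
    not_not] at hsnd
  exact hnab (hsnd (p.adj_snd hnil).ne' ▸ p.adj_snd hnil)

lemma Separates.ne_and_not_adj (h : G.Separates S a b) (hx : x ∈ G.reachAvoiding S a)
    (hy : y ∈ G.reachAvoiding S b) : x ≠ y ∧ ¬G.Adj x y := by
  have hya : y ∉ G.reachAvoiding S a := fun hya =>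
    h.2.2 (mem_reachAvoiding_trans hya (mem_reachAvoiding_comm.1 hy))
  exact ⟨fun hxy => hya (hxy ▸ hx), fun hxy =>
    hya (mem_reachAvoiding_of_adj hx hxy (notMem_of_mem_reachAvoiding hy))⟩

lemma exists_adj_of_minimal_separates (hS : Minimal (G.Separates · a b) S) {s : V}
    (hs : s ∈ S) : ∃ x ∈ G.reachAvoiding S a, G.Adj x s := by
  have hsep : ¬G.Separates (S \ {s}) a b :=
    hS.not_prop_of_lt (Set.sdiff_singleton_ssubset.2 hs)
  simp only [Separates, Set.mem_sdiff, hS.prop.1, hS.prop.2.1, false_and, not_false_eq_true,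
    true_and, not_not] at hsep
  obtain ⟨p, hp⟩ := hsep
  obtain ⟨d, hd, hd₁, hd₂⟩ :=
    p.exists_boundary_dart _ (mem_reachAvoiding_self hS.prop.1) hS.prop.2.2
  have hdS : d.snd ∈ S := by_contra fun h => hd₂ (mem_reachAvoiding_of_adj hd₁ d.adj h)
  have hds : d.snd = s :=
    by_contra fun h => hp _ (p.dart_snd_mem_support_of_mem_darts hd) ⟨hdS, h⟩
  exact ⟨d.fst, hd₁, hds ▸ d.adj⟩

lemma exists_isChordless_of_minimal_separates (hS : Minimal (G.Separates · a b) S)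
    (hx : x ∈ S) (hy : y ∈ S) : ∃ p : G.Walk x y, p.IsPath ∧ p.IsChordless ∧
      ∀ z ∈ p.support, z = x ∨ z = y ∨ z ∈ G.reachAvoiding S a := by
  obtain ⟨x', hx', hxx'⟩ := exists_adj_of_minimal_separates hS hx
  obtain ⟨y', hy', hyy'⟩ := exists_adj_of_minimal_separates hS hy
  obtain ⟨w, hw⟩ := exists_walk_of_mem_reachAvoiding hx' hy'
  obtain ⟨p, hp, hpc, hpw⟩ := (Walk.cons hxx'.symm (w.concat hyy')).exists_isPath_isChordless
  refine ⟨p, hp, hpc, fun z hz => ?_⟩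
  have hz := hpw hz
  simp only [Walk.support_cons, Walk.support_concat, List.mem_cons, List.mem_append,
    List.not_mem_nil, or_false] at hz
  rcases hz with h | h | h
  exacts [Or.inl h, Or.inr (Or.inr (hw z h)), Or.inr (Or.inl h)]

lemma _root_.IsChordal.isClique_of_minimal_separates (hG : IsChordal G)
    (hS : Minimal (G.Separates · a b) S) : G.IsClique S := by
  have hS' : Minimal (G.Separates · b a) S := by simpa only [separates_comm] using hS
  intro x hx y hy hxy
  obtain ⟨p, hp, hpc, hpA⟩ := exists_isChordless_of_minimal_separates hS hx hy
  obtain ⟨q, hq, hqc, hqB⟩ := exists_isChordless_of_minimal_separates hS' hx hy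
  exact hG.adj_of_isChordless hxy (fun _ hz _ hw => hS.prop.ne_and_not_adj hz hw) hp hq hpc hqc
    hpA hqB

end Separators

lemma exists_notMem_isClique_neighborSet_of_induce {R S K : Set V} (hS : G.IsClique S)
    (hRS : Disjoint R S) (hRK : Disjoint R K) (hR : ∀ x ∈ R, ∀ y, G.Adj x y → y ∈ R ∪ S)
    (hRne : R.Nonempty)
    (h : ∀ K' : Set ↥(R ∪ S), (G.induce (R ∪ S)).IsClique K' → (∃ x, x ∉ K') →
      ∃ x ∉ K', (G.induce (R ∪ S)).IsClique ((G.induce (R ∪ S)).neighborSet x)) :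
    ∃ x ∉ K, G.IsClique (G.neighborSet x) := by
  obtain ⟨r, hr⟩ := hRne
  obtain ⟨⟨x, hxRS⟩, hxS, hx⟩ := h (Subtype.val ⁻¹' S)
    (fun u hu w hw huw => hS hu hw (Subtype.val_injective.ne huw))
    ⟨⟨r, Or.inl hr⟩, hRS.notMem_of_mem_left hr⟩
  have hxR : x ∈ R := hxRS.resolve_right hxS
  refine ⟨x, hRK.notMem_of_mem_left hxR, fun y hy z hz hyz => ?_⟩
  exact hx (x := ⟨y, hR x hxR y hy⟩) hy (y := ⟨z, hR x hxR z hz⟩) hz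
    fun h => hyz (congrArg Subtype.val h)

theorem _root_.IsChordal.exists_notMem_isClique_neighborSet [Finite V] (hG : IsChordal G)
    {K : Set V} (hK : G.IsClique K) (hKV : ∃ x, x ∉ K) :
    ∃ x ∉ K, G.IsClique (G.neighborSet x) := by
  induction hn : Nat.card V using Nat.strong_induction_on generalizing V with
  | _ n ih =>
  by_cases hcomp : ∀ x y : V, x ≠ y → G.Adj x y
  · obtain ⟨x, hx⟩ := hKV
    exact ⟨x, hx, fun y _ z _ hyz => hcomp y z hyz⟩
  push Not at hcomp
  obtain ⟨a, b, hab, hnab⟩ := hcomp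
  obtain ⟨S, -, hS⟩ :=
    exists_minimal_le_of_wellFoundedLT (G.Separates · a b) _ (separates_compl_pair hab hnab)
  have hSc := hG.isClique_of_minimal_separates hS
  have side (a b : V) (hS : Minimal (G.Separates · a b) S)
      (hK : Disjoint (G.reachAvoiding S a) K) : ∃ x ∉ K, G.IsClique (G.neighborSet x) := by
    refine exists_notMem_isClique_neighborSet_of_induce hSc
      (Set.disjoint_left.2 fun x hx => notMem_of_mem_reachAvoiding hx) hK ?_
      ⟨a, mem_reachAvoiding_self hS.prop.1⟩ fun K' hK' hK'V => ?_
    · intro x hx y hxy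
      by_cases hy : y ∈ S
      exacts [Or.inr hy, Or.inl (mem_reachAvoiding_of_adj hx hxy hy)]
    · refine ih _ ?_ (hG.of_embedding (Embedding.induce _)) hK' hK'V rfl
      rw [← hn, Nat.card_coe_set_eq]
      refine Set.ncard_lt_card fun h => ?_
      have hb : b ∈ G.reachAvoiding S a ∪ S := h ▸ Set.mem_univ b
      exact hb.elim hS.prop.2.2 hS.prop.2.1
  by_cases hKa : Disjoint (G.reachAvoiding S a) K
  · exact side a b hS hKa
  · refine side b a (by simpa only [separates_comm] using hS) ?_
    obtain ⟨k, hka, hkK⟩ := Set.not_disjoint_iff.1 hKa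
    refine Set.disjoint_left.2 fun k' hk'b hk'K => ?_
    have hkk' := hS.prop.ne_and_not_adj hka hk'b
    exact hkk'.2 (hK hkK hk'K hkk'.1)

lemma IsAcyclic.not_isCycle_of_forall_mem_range {H : SimpleGraph W} (hG : G.IsAcyclic)
    (f : G ↪g H) {u : W} {c : H.Walk u u} (hc : c.IsCycle)
    (hcf : ∀ x ∈ c.support, x ∈ Set.range f) : False := by
  have hacyc : (H.induce (Set.range f)).IsAcyclic := f.isoInduceRange.isAcyclic_iff.1 hG
  exact hacyc (c.induce _ hcf) (Walk.IsCycle.of_map (f := (Embedding.induce _).toHom)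
    (by rwa [Walk.map_induce]))

lemma IsAcyclic.sum {H : SimpleGraph W} (hG : G.IsAcyclic) (hH : H.IsAcyclic) :
    (G ⊕g H).IsAcyclic := by
  classical
  rintro (v | w) c hc
  · refine hG.not_isCycle_of_forall_mem_range Embedding.sumInl hc fun x hx => ?_
    rcases x with y | y
    · exact ⟨y, rfl⟩
    · exact absurd ⟨c.takeUntil _ hx⟩ (not_reachable_sum_inl_inr v y)
  · refine hH.not_isCycle_of_forall_mem_range Embedding.sumInr hc fun x hx => ?_
    rcases x with y | y
    · exact absurd ⟨(c.takeUntil _ hx).reverse⟩ (not_reachable_sum_inl_inr y w)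
    · exact ⟨y, rfl⟩

lemma IsTree.sum_sup_edge {H : SimpleGraph W} (hG : G.IsTree) (hH : H.IsTree) (v : V)
    (w : W) : ((G ⊕g H) ⊔ edge (.inl v) (.inr w)).IsTree :=
  ⟨hG.connected.sum_sup_edge hH.connected,
    (hG.isAcyclic.sum hH.isAcyclic).sup_edge_of_not_reachable (not_reachable_sum_inl_inr v w)⟩

lemma Connected.induce_image {H : SimpleGraph W} {s : Set V} (hs : (G.induce s).Connected)
    (φ : G →g H) : (H.induce (φ '' s)).Connected :=
  hs.map (induceHom φ (Set.mapsTo_image φ s)) (by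
    rintro ⟨_, x, hx, rfl⟩
    exact ⟨⟨x, hx⟩, rfl⟩)

lemma induce_singleton_connected (v : V) : (G.induce {v}).Connected := by
  rw [induce_singleton_eq_top]
  exact connected_top

lemma IsSubtreeRepresentation.exists_forall_mem_of_isClique {T : SimpleGraph ι}
    {f : V → Set ι} (hf : G.IsSubtreeRepresentation T f) (hT : T.IsTree) {K : Set V}
    (hK : G.IsClique K) (hKfin : K.Finite) : ∃ t, ∀ u ∈ K, t ∈ f u := by
  classical
  rcases hKfin.toFinset.eq_empty_or_nonempty with hempty | hne
  · obtain ⟨t⟩ := hT.connected.nonempty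
    exact ⟨t, fun u hu => absurd (hKfin.mem_toFinset.2 hu) (by simp [hempty])⟩
  · obtain ⟨t, ht⟩ := hT.isAcyclic.exists_mem_of_pairwise_inter_nonempty hne
      (fun u _ => hf.connected u) fun u hu w hw huw =>
        (hf.adj_iff huw).1 (hK (by simpa using hu) (by simpa using hw) huw)
    exact ⟨t, fun u hu => ht u (by simpa using hu)⟩

lemma IsSubtreeRepresentation.exists_sum_unit {T : SimpleGraph ι} {v : V}
    {f : ↥({v}ᶜ : Set V) → Set ι} (hf : (G.induce {v}ᶜ).IsSubtreeRepresentation T f)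
    (hv : G.IsClique (G.neighborSet v)) {t : ι}
    (ht : ∀ u (hu : G.Adj v u), t ∈ f ⟨u, hu.ne'⟩) :
    ∃ f' : V → Set (ι ⊕ Unit),
      G.IsSubtreeRepresentation ((T ⊕g ⊥) ⊔ edge (.inl t) (.inr ())) f' := by
  classical
  set T' : SimpleGraph (ι ⊕ Unit) := (T ⊕g ⊥) ⊔ edge (.inl t) (.inr ())
  let f' : V → Set (ι ⊕ Unit) := fun u => if h : u = v then {.inr ()}
    else if G.Adj v u then insert (.inr ()) (.inl '' f ⟨u, h⟩) else .inl '' f ⟨u, h⟩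
  have hl (u : V) (x : ι) : .inl x ∈ f' u ↔ ∃ h : u ≠ v, x ∈ f ⟨u, h⟩ := by
    by_cases h : u = v <;> by_cases hvu : G.Adj v u <;> simp [f', h, hvu]
  have hr (u : V) : .inr () ∈ f' u ↔ u = v ∨ G.Adj v u := by
    by_cases h : u = v <;> by_cases hvu : G.Adj v u <;> simp [f', h, hvu]
  refine ⟨f', fun u => ?_, fun u w huw => ?_⟩
  · have himg (h : u ≠ v) : (T'.induce (.inl '' f ⟨u, h⟩)).Connected :=
      (hf.connected _).induce_image ((Hom.ofLE le_sup_left).comp Embedding.sumInl.toHom)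
    by_cases h : u = v
    · rw [show f' u = {.inr ()} from dif_pos h]
      exact induce_singleton_connected _
    by_cases hvu : G.Adj v u
    · rw [show f' u = insert (.inr ()) (.inl '' f ⟨u, h⟩) from (dif_neg h).trans (if_pos hvu),
        Set.insert_eq]
      exact connected_induce_union (induce_singleton_connected _).preconnected
        (himg h).preconnected (Set.mem_singleton _) ⟨t, ht u hvu, rfl⟩ (by simp [T', edge_adj])
    · rw [show f' u = .inl '' f ⟨u, h⟩ from (dif_neg h).trans (if_neg hvu)]
      exact himg h
  · have hinter : (f' u ∩ f' w).Nonempty ↔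
        (∃ x, .inl x ∈ f' u ∧ .inl x ∈ f' w) ∨ (.inr () ∈ f' u ∧ .inr () ∈ f' w) := by
      simp only [Set.Nonempty, Set.mem_inter_iff, Sum.exists]
      exact or_congr_right ⟨fun ⟨_, h⟩ => h, fun h => ⟨(), h⟩⟩
    rw [hinter, hr, hr]
    simp only [hl]
    by_cases hu : u = v
    · subst hu
      simp [huw.symm]
    by_cases hw : w = v
    · subst hw
      simp [hu, G.adj_comm]
    have huw' := hf.adj_iff (u := ⟨u, hu⟩) (v := ⟨w, hw⟩) fun h => huw (congrArg Subtype.val h)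
    simp only [comap_adj, Function.Embedding.subtype_apply] at huw'
    simp only [hu, hw, false_or, huw', Ne, not_false_eq_true, exists_true_left]
    refine ⟨Or.inl, ?_⟩
    rintro (h | ⟨hvu, hvw⟩)
    exacts [h, huw'.1 (hv hvu hvw huw)]

theorem _root_.IsChordal.exists_isSubtreeRepresentation {V : Type} [Finite V]
    {G : SimpleGraph V} (hG : IsChordal G) : ∃ (ι : Type) (T : SimpleGraph ι) (f : V → Set ι),
      T.IsTree ∧ G.IsSubtreeRepresentation T f := by
  induction hn : Nat.card V using Nat.strong_induction_on generalizing V with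
  | _ n ih =>
  cases isEmpty_or_nonempty V
  · exact ⟨Unit, ⊥, isEmptyElim, .of_subsingleton, isEmptyElim, fun u => isEmptyElim u⟩
  obtain ⟨v, -, hv⟩ := hG.exists_notMem_isClique_neighborSet (K := ∅) (by simp) (by simp)
  have hcard : Nat.card ↥({v}ᶜ : Set V) < n := by
    rw [← hn, Nat.card_coe_set_eq]
    exact Set.ncard_lt_card fun h => (h ▸ Set.mem_univ v : v ∈ ({v}ᶜ : Set V)) rfl
  obtain ⟨ι, T, f, hT, hf⟩ := ih _ hcard (hG.of_embedding (Embedding.induce {v}ᶜ)) rfl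
  obtain ⟨t, ht⟩ := hf.exists_forall_mem_of_isClique hT (K := {u | G.Adj v u})
    (fun u hu w hw huw => hv hu hw (Subtype.coe_ne_coe.2 huw)) (Set.toFinite _)
  obtain ⟨f', hf'⟩ := hf.exists_sum_unit hv fun u hu => ht ⟨u, hu.ne'⟩ hu
  exact ⟨ι ⊕ Unit, _, f', hT.sum_sup_edge .of_subsingleton t (), hf'⟩

end SimpleGraph

/-- Gavril: a graph `G` is chordal iff `G` is the intersection graph of a family of
subtrees of a tree: there are a tree `T` and an assignment to every vertex `v` of `G`
of a nonempty set `f v` of nodes of `T` inducing a connected subtree, such that two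
distinct vertices of `G` are adjacent iff the corresponding subtrees intersect. -/
theorem isChordal_iff_intersectionGraph_of_subtrees {V : Type} [Fintype V]
    (G : SimpleGraph V) :
    IsChordal G ↔
      ∃ (ι : Type) (T : SimpleGraph ι) (f : V → Set ι),
        T.IsTree ∧ (∀ v, (f v).Nonempty) ∧ (∀ v, (T.induce (f v)).Connected) ∧
        ∀ u v : V, u ≠ v → (G.Adj u v ↔ (f u ∩ f v).Nonempty) := by
  constructor
  · intro hG
    obtain ⟨ι, T, f, hT, hf⟩ := hG.exists_isSubtreeRepresentation
    exact ⟨ι, T, f, hT, fun v => Set.nonempty_coe_sort.1 (hf.connected v).nonempty,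
      hf.connected, fun u v => @hf.adj_iff u v⟩
  · rintro ⟨ι, T, f, hT, -, hconn, hadj⟩
    exact SimpleGraph.IsSubtreeRepresentation.isChordal ⟨hconn, hadj⟩ hT.isAcyclic
end

section
/- The filled graph produced by the elimination game is chordal: if G is a graph and α an ordering of its vertices, and at each step i the neighborhood of the i-th vertex in the current graph is turned into a clique and the vertex is deleted, then the graph G⁺_α obtained by adding all fill edges to G is chordal. -/
/-- Complete the neighborhood of `v` into a clique (adding the fill edges of the
elimination step at `v`). -/
def fillStep {V : Type*} (G : SimpleGraph V) (v : V) : SimpleGraph V :=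
  G ⊔ SimpleGraph.fromRel (fun a b => G.Adj v a ∧ G.Adj v b)

/-- Delete the vertex `v` (remove all edges incident to `v`). -/
def eraseVertex {V : Type*} (G : SimpleGraph V) (v : V) : SimpleGraph V :=
  G.deleteEdges {e | v ∈ e}

/-- The filled graph `G⁺_α` of the elimination game on `G` with elimination order
given by the list `L`: at each step the neighborhood of the current vertex is turned
into a clique and the vertex is deleted; the filled graph consists of the original
edges together with all fill edges introduced during the process. -/
def filledGraph {V : Type*} : SimpleGraph V → List V → SimpleGraph V
  | G, [] => G
  | G, v :: L => G ⊔ filledGraph (eraseVertex (fillStep G v) v) L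


/-!
Induction on the elimination order. The first eliminated vertex `v` is simplicial in the filled
graph: its neighbours there are its neighbours in `G`, which the first step turned into a clique.
Deleting `v` from the filled graph leaves exactly the filled graph of the remaining game, which is
chordal by induction. Adding a simplicial vertex preserves chordality: a cycle of length > 3
through `v` has the chord joining the two cycle-neighbours of `v`, and a cycle avoiding `v` is
a cycle of the graph with `v` deleted.
-/

open SimpleGraph

section

variable {V : Type*}

namespace SimpleGraph

lemma support_sup (G H : SimpleGraph V) : (G ⊔ H).support = G.support ∪ H.support := by
  ext
  simp only [mem_support, sup_adj, exists_or, Set.mem_union]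

lemma Walk.IsCycle.snd_penultimate_notMem_edges {G : SimpleGraph V} {v : V} {c : G.Walk v v}
    (hc : c.IsCycle) (hl : 3 < c.length) : s(c.snd, c.penultimate) ∉ c.edges := by
  have hnil := hc.not_nil
  have hedges : c.edges = s(v, c.snd) :: c.tail.edges := by
    conv_lhs => rw [← c.cons_tail_eq hnil]
    rfl
  rw [hedges, List.mem_cons, not_or, Sym2.eq_iff]
  refine ⟨?_, fun h => ?_⟩
  · rintro (⟨h, -⟩ | ⟨-, h⟩)
    · exact (c.adj_snd hnil).ne h.symm
    · exact (c.adj_penultimate hnil).ne h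
  · have hpen : c.getVert (c.length - 1) = c.getVert 2 := by
      simpa [Walk.snd, Walk.penultimate] using hc.isPath_tail.eq_snd_of_mem_edges h
    have := hc.getVert_injOn (by simp; omega) (by simp; omega) hpen
    omega

end SimpleGraph

lemma isChordal_of_support_eq_empty {G : SimpleGraph V} (hG : G.support = ∅) : IsChordal G := by
  intro u c hc _
  exact absurd (c.adj_snd hc.not_nil).mem_support_left (hG ▸ Set.notMem_empty u)

lemma IsChordal.of_isClique_neighborSet {H : SimpleGraph V} {v : V}
    (hv : H.IsClique (H.neighborSet v)) (hH : IsChordal (eraseVertex H v)) : IsChordal H := by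
  classical
  intro u c hc hl
  by_cases hvc : v ∈ c.support
  · set r := c.rotate v hvc
    have hr : r.IsCycle := hc.rotate hvc
    have hnil := hr.not_nil
    refine ⟨r.snd, r.penultimate, ?_, ?_, ?_, fun h => ?_⟩
    · exact (c.mem_support_rotate_iff v hvc).mp (r.getVert_mem_support 1)
    · exact (c.mem_support_rotate_iff v hvc).mp (r.getVert_mem_support _)
    · exact hv (r.adj_snd hnil) (r.adj_penultimate hnil).symm hr.snd_ne_penultimate
    · exact hr.snd_penultimate_notMem_edges (by simpa [r] using hl)
        ((c.rotate_edges v hvc).mem_iff.mpr h)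
  · have hedges : ∀ e ∈ c.edges, e ∈ (eraseVertex H v).edgeSet := fun e he => by
      rw [eraseVertex, edgeSet_deleteEdges]
      exact ⟨c.edges_subset_edgeSet he, fun hve => hvc (c.mem_support_of_mem_edges he hve)⟩
    obtain ⟨x, y, hx, hy, hxy, hne⟩ :=
      hH u (c.transfer _ hedges) (hc.transfer hedges) (by simpa using hl)
    exact ⟨x, y, by simpa using hx, by simpa using hy, hxy.1, by simpa using hne⟩

lemma eraseVertex_sup_eq {G F : SimpleGraph V} {v : V} (hv : v ∉ F.support)
    (hGF : eraseVertex G v ≤ F) : eraseVertex (G ⊔ F) v = F := by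
  ext x y
  simp only [eraseVertex, deleteEdges_adj, sup_adj, Set.mem_ofPred_eq, Sym2.mem_iff, not_or]
  constructor
  · rintro ⟨hG | hF, hx, hy⟩
    · exact hGF (show (eraseVertex G v).Adj x y from ⟨hG, by simp [hx, hy]⟩)
    · exact hF
  · intro h
    exact ⟨Or.inr h, fun hx => hv (hx ▸ h.mem_support_left),
      fun hy => hv (hy ▸ h.mem_support_right)⟩

lemma support_eraseVertex_fillStep_subset (G : SimpleGraph V) (v : V) :
    (eraseVertex (fillStep G v) v).support ⊆ G.support \ {v} := by
  rintro x ⟨y, hxy⟩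
  simp only [eraseVertex, fillStep, deleteEdges_adj, sup_adj, fromRel_adj, Set.mem_ofPred_eq,
    Sym2.mem_iff, not_or] at hxy
  obtain ⟨hxy | ⟨-, ⟨hvx, -⟩ | ⟨-, hvx⟩⟩, hvx', -⟩ := hxy
  · exact ⟨hxy.mem_support_left, Ne.symm hvx'⟩
  · exact ⟨hvx.mem_support_right, Ne.symm hvx'⟩
  · exact ⟨hvx.mem_support_right, Ne.symm hvx'⟩

lemma eraseVertex_le_eraseVertex_fillStep (G : SimpleGraph V) (v : V) :
    eraseVertex G v ≤ eraseVertex (fillStep G v) v :=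
  deleteEdges_mono le_sup_left

lemma isClique_neighborSet_eraseVertex_fillStep (G : SimpleGraph V) (v : V) :
    (eraseVertex (fillStep G v) v).IsClique (G.neighborSet v) := by
  intro a ha b hb hab
  simp only [eraseVertex, fillStep, deleteEdges_adj, sup_adj, fromRel_adj, Set.mem_ofPred_eq,
    Sym2.mem_iff, not_or]
  exact ⟨Or.inr ⟨hab, Or.inl ⟨ha, hb⟩⟩, ha.ne, hb.ne⟩

lemma le_filledGraph (G : SimpleGraph V) : ∀ L : List V, G ≤ filledGraph G L
  | [] => le_rfl
  | _ :: _ => le_sup_left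

lemma support_filledGraph : ∀ (G : SimpleGraph V) (L : List V),
    (filledGraph G L).support = G.support
  | _, [] => rfl
  | G, v :: L => by
    rw [filledGraph, support_sup, support_filledGraph, Set.union_eq_left]
    exact (support_eraseVertex_fillStep_subset G v).trans Set.sdiff_subset

lemma isChordal_filledGraph_of_support_subset : ∀ (G : SimpleGraph V) (L : List V),
    G.support ⊆ {v | v ∈ L} → IsChordal (filledGraph G L)
  | G, [], hG => isChordal_of_support_eq_empty (G := G) (by simpa using hG)
  | G, v :: L, hG => by
    set G' := eraseVertex (fillStep G v) v
    have hG' : G'.support ⊆ {w | w ∈ L} := fun w hw => by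
      obtain ⟨hwG, hwv⟩ := support_eraseVertex_fillStep_subset G v hw
      exact (List.mem_cons.mp (hG hwG)).resolve_left hwv
    have hvF : v ∉ (filledGraph G' L).support := by
      rw [support_filledGraph]
      exact fun h => (support_eraseVertex_fillStep_subset G v h).2 rfl
    have hF : G' ≤ filledGraph G' L := le_filledGraph G' L
    have hN : (G ⊔ filledGraph G' L).neighborSet v = G.neighborSet v := by
      ext x
      simp only [mem_neighborSet, sup_adj, or_iff_left_iff_imp]
      exact fun h => absurd h.mem_support_left hvF
    refine IsChordal.of_isClique_neighborSet (v := v) ?_ ?_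
    · rw [filledGraph, hN]
      exact (isClique_neighborSet_eraseVertex_fillStep G v).mono (hF.trans le_sup_right)
    · rw [filledGraph, eraseVertex_sup_eq hvF ((eraseVertex_le_eraseVertex_fillStep G v).trans hF)]
      exact isChordal_filledGraph_of_support_subset G' L hG'

end

theorem filledGraph_isChordal_general {V : Type*} (G : SimpleGraph V)
    (L : List V) (hall : ∀ v : V, v ∈ L) :
    IsChordal (filledGraph G L) :=
  isChordal_filledGraph_of_support_subset G L fun v _ => hall v

/-- The filled graph produced by the elimination game on `G`, processing all vertices
in the order of a list `L` enumerating the vertices, is chordal. -/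
theorem filledGraph_isChordal {V : Type*} [Fintype V] (G : SimpleGraph V)
    (L : List V) (hnd : L.Nodup) (hall : ∀ v : V, v ∈ L) :
    IsChordal (filledGraph G L) :=
  filledGraph_isChordal_general G L hall
end

section
/- Every chordal graph with at least one vertex has a simplicial vertex. -/
namespace SimpleGraph

variable {V : Type*} {G : SimpleGraph V}

def restrict (G : SimpleGraph V) (s : Set V) : SimpleGraph V where
  Adj x y := G.Adj x y ∧ x ∈ s ∧ y ∈ s
  symm := ⟨fun _ _ h => ⟨h.1.symm, h.2.2, h.2.1⟩⟩
  loopless := ⟨fun x h => G.loopless.irrefl x h.1⟩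

@[simp]
theorem restrict_adj {s : Set V} {x y : V} :
    (G.restrict s).Adj x y ↔ G.Adj x y ∧ x ∈ s ∧ y ∈ s :=
  Iff.rfl

theorem restrict_le (s : Set V) : G.restrict s ≤ G := fun _ _ h => h.1

theorem restrict_mono {s t : Set V} (h : s ⊆ t) : G.restrict s ≤ G.restrict t :=
  fun _ _ hxy => ⟨hxy.1, h hxy.2.1, h hxy.2.2⟩

theorem Walk.support_subset_of_restrict {s : Set V} {u v : V} (p : (G.restrict s).Walk u v)
    (hu : u ∈ s) : ∀ z ∈ p.support, z ∈ s := by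
  induction p with
  | nil => simpa using hu
  | cons h _ ih => simpa [hu] using ih h.2.2

theorem Reachable.mem_of_restrict {s : Set V} {u v : V} (h : (G.restrict s).Reachable u v)
    (hu : u ∈ s) : v ∈ s :=
  h.some.support_subset_of_restrict hu v h.some.end_mem_support

def closedNeighborSet (G : SimpleGraph V) (v : V) : Set V := insert v (G.neighborSet v)

@[simp]
theorem mem_closedNeighborSet {v w : V} : w ∈ G.closedNeighborSet v ↔ w = v ∨ G.Adj v w :=
  Iff.rfl

def IsSimplicialIn (G : SimpleGraph V) (W : Set V) (u : V) : Prop :=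
  G.IsClique (G.neighborSet u ∩ W)

theorem IsSimplicialIn.of_neighborSet_inter_subset {W W' : Set V} {u : V}
    (hu : G.IsSimplicialIn W' u) (h : G.neighborSet u ∩ W ⊆ W') : G.IsSimplicialIn W u :=
  IsClique.subset (s := G.neighborSet u ∩ W') (fun _ hz => ⟨hz.1, h hz⟩) hu

theorem Walk.isChordless_of_length_eq_dist {u v : V} {p : G.Walk u v}
    (hp : p.length = G.dist u v) : p.IsChordless := by
  rw [Walk.isChordless_iff_forall_mem_edges]
  intro a b ha hb hab
  rw [Walk.mem_support_iff_exists_getVert] at ha hb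
  obtain ⟨i, rfl, hi⟩ := ha
  obtain ⟨j, rfl, hj⟩ := hb
  wlog hij : i < j generalizing i j
  · rcases Nat.lt_or_ge j i with hji | hji
    · exact Sym2.eq_swap ▸ this j hj i hi hab.symm hji
    · exact absurd (congrArg p.getVert (le_antisymm (not_lt.mp hij) hji)).symm hab.ne
  by_contra hnotin
  have hsucc : j ≠ i + 1 := by
    rintro rfl
    exact hnotin (p.mk_mem_edges_iff_exists.mpr ⟨i, by omega, rfl⟩)
  have hshort := dist_le ((p.take i).append (Walk.cons hab (p.drop j)))
  simp only [Walk.length_append, Walk.take_length, Walk.length_cons, Walk.drop_length] at hshort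
  omega

end SimpleGraph

open SimpleGraph

section

variable {V : Type*} {G : SimpleGraph V}

theorem IsChordal.not_isChordless (hG : IsChordal G) {u : V} {c : G.Walk u u} (hc : c.IsCycle)
    (hlen : 3 < c.length) : ¬c.IsChordless := by
  obtain ⟨x, y, hx, hy, hxy, hnot⟩ := hG u c hc hlen
  exact fun h => hnot (h.mem_edges hx hy hxy)

theorem IsChordal.adj_of_reachable_outside_closedNeighborSet (hG : IsChordal G) {v x y : V}
    (hvx : G.Adj v x) (hvy : G.Adj v y) (hxy : x ≠ y)
    (hreach : (G.restrict (insert x (insert y (G.closedNeighborSet v)ᶜ))).Reachable x y) :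
    G.Adj x y := by
  set U := insert x (insert y (G.closedNeighborSet v)ᶜ)
  by_contra hnxy
  obtain ⟨q, hq⟩ := hreach.exists_walk_length_eq_dist
  have hqU := q.support_subset_of_restrict (Set.mem_insert x _)
  have hvq : v ∉ q.support := fun h => by simpa [U, hvx.ne, hvy.ne] using hqU v h
  have hqlen : 2 ≤ q.length := by
    rcases Nat.lt_or_ge q.length 2 with h | h
    · interval_cases hl : q.length
      · exact absurd (Walk.eq_of_length_eq_zero hl) hxy
      · exact absurd (q.adj_of_length_eq_one hl).1 hnxy
    · exact h
  let c : G.Walk y y := .cons hvy.symm (.cons hvx (q.mapLe (restrict_le U)))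
  have hc : c.IsCycle := by
    refine (Walk.cons_isCycle_iff _ _).mpr ⟨?_, ?_⟩
    · simpa [Walk.cons_isPath_iff, hvq] using q.isPath_of_length_eq_dist hq
    · simp only [Walk.edges_cons, Walk.edges_mapLe_eq_edges, List.mem_cons, not_or]
      exact ⟨by simp [hxy.symm, hvx.ne], fun h => hvq (q.snd_mem_support_of_mem_edges h)⟩
  refine hG.not_isChordless hc (by simp [c]; omega) ?_
  -- `c` is chordless: `q` is a shortest path in `G.restrict U`, and on it `v` sees only `x`, `y`.
  have hsupp : ∀ a ∈ c.support, a = v ∨ a ∈ q.support := by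
    simp only [c, Walk.support_cons, Walk.support_mapLe_eq_support, List.mem_cons]
    rintro a (rfl | rfl | ha)
    exacts [Or.inr q.end_mem_support, Or.inl rfl, Or.inr ha]
  have hspoke : ∀ b ∈ q.support, G.Adj v b → s(v, b) ∈ c.edges := by
    intro b hb hvb
    rcases hqU b hb with rfl | rfl | hbN
    · simp [c]
    · simp [c, Sym2.eq_swap]
    · simp [hvb] at hbN
  have hpath : ∀ a ∈ q.support, ∀ b ∈ q.support, G.Adj a b → s(a, b) ∈ c.edges := by
    intro a ha b hb hab
    have := (q.isChordless_of_length_eq_dist hq).mem_edges ha hb ⟨hab, hqU a ha, hqU b hb⟩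
    simp [c, this]
  rw [Walk.isChordless_iff_forall_mem_edges]
  intro a b ha hb hab
  rcases hsupp a ha with rfl | ha <;> rcases hsupp b hb with rfl | hb
  · exact absurd rfl hab.ne
  · exact hspoke b hb hab
  · exact Sym2.eq_swap ▸ hspoke a ha hab.symm
  · exact hpath a ha b hb hab

theorem IsChordal.isClique_neighborSet_inter_adj_of_reachable (hG : IsChordal G) {v : V}
    {C : Set V} (hCN : ∀ c ∈ C, c ∉ G.closedNeighborSet v)
    (hC : ∀ a ∈ C, ∀ b ∈ C, (G.restrict (G.closedNeighborSet v)ᶜ).Reachable a b) :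
    G.IsClique (G.neighborSet v ∩ {x | ∃ c ∈ C, G.Adj x c}) := by
  rintro x ⟨hvx, cx, hcx, hxcx⟩ y ⟨hvy, cy, hcy, hycy⟩ hxy
  have hU : (G.closedNeighborSet v)ᶜ ⊆ insert x (insert y (G.closedNeighborSet v)ᶜ) :=
    fun z hz => Or.inr (Or.inr hz)
  refine hG.adj_of_reachable_outside_closedNeighborSet hvx hvy hxy ?_
  refine (restrict_adj.mpr ⟨hxcx, Or.inl rfl, hU (hCN cx hcx)⟩).reachable.trans ?_
  refine ((hC cx hcx cy hcy).mono (restrict_mono hU)).trans ?_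
  exact (restrict_adj.mpr ⟨hycy.symm, hU (hCN cy hcy), Or.inr (Or.inl rfl)⟩).reachable

theorem exists_isSimplicialIn_not_mem_of_isClique {W K : Set V}
    (hW : ∀ v ∈ W, ¬W ⊆ G.closedNeighborSet v →
      ∃ u ∈ W \ G.closedNeighborSet v, G.IsSimplicialIn W u)
    (hK : G.IsClique K) (hWK : ¬W ⊆ K) : ∃ u ∈ W \ K, G.IsSimplicialIn W u := by
  by_cases hWclique : G.IsClique W
  · obtain ⟨u, huW, huK⟩ := Set.not_subset.mp hWK
    exact ⟨u, ⟨huW, huK⟩, hWclique.subset Set.inter_subset_right⟩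
  obtain ⟨p, hp, q, hq, hpq, hnpq⟩ : ∃ p ∈ W, ∃ q ∈ W, p ≠ q ∧ ¬G.Adj p q := by
    simpa [IsClique, Set.Pairwise] using hWclique
  obtain ⟨u₁, ⟨hu₁W, hu₁p⟩, hu₁⟩ :=
    hW p hp fun h => by simpa [hpq.symm, hnpq] using h hq
  obtain ⟨u₂, ⟨hu₂W, hu₂u₁⟩, hu₂⟩ :=
    hW u₁ hu₁W fun h => hu₁p (by simpa [eq_comm, G.adj_comm] using h hp)
  by_cases hu₁K : u₁ ∈ K
  · refine ⟨u₂, ⟨hu₂W, fun hu₂K => hu₂u₁ ?_⟩, hu₂⟩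
    by_cases h : u₂ = u₁
    · exact Or.inl h
    · exact Or.inr (hK hu₁K hu₂K (Ne.symm h))
  · exact ⟨u₁, ⟨hu₁W, hu₁K⟩, hu₁⟩

theorem IsChordal.exists_isSimplicialIn_of_ssubset (hG : IsChordal G) {W : Set V}
    (ih : ∀ W' ⊂ W, ∀ v ∈ W', ¬W' ⊆ G.closedNeighborSet v →
      ∃ u ∈ W' \ G.closedNeighborSet v, G.IsSimplicialIn W' u)
    {v : V} (hv : v ∈ W) (hvW : ¬W ⊆ G.closedNeighborSet v) :
    ∃ u ∈ W \ G.closedNeighborSet v, G.IsSimplicialIn W u := by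
  set N := G.closedNeighborSet v
  obtain ⟨w, hwW, hwN⟩ := Set.not_subset.mp hvW
  set C := {c | (G.restrict (W \ N)).Reachable w c}
  have hCW : C ⊆ W \ N := fun c hc => Reachable.mem_of_restrict hc ⟨hwW, hwN⟩
  have hwC : w ∈ C := Reachable.refl w
  set S := {s | s ∈ W ∧ s ∉ C ∧ ∃ c ∈ C, G.Adj s c}
  have hSN : ∀ s ∈ S, G.Adj v s := by
    rintro s ⟨hsW, hsC, c, hc, hsc⟩
    have hsN : s ∈ N := by
      by_contra hsN
      exact hsC (hc.trans (restrict_adj.mpr ⟨hsc.symm, hCW hc, hsW, hsN⟩).reachable)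
    rcases hsN with rfl | hvs
    · exact absurd (Or.inr hsc) (hCW hc).2
    · exact hvs
  have hS : G.IsClique S := by
    have hSsub : S ⊆ G.neighborSet v ∩ {x | ∃ c ∈ C, G.Adj x c} :=
      fun s hs => ⟨hSN s hs, hs.2.2⟩
    refine IsClique.subset hSsub
      (hG.isClique_neighborSet_inter_adj_of_reachable (fun c hc => (hCW hc).2) ?_)
    exact fun a ha b hb => (ha.symm.trans hb).mono (restrict_mono (Set.sdiff_subset_compl W N))
  have hnbhd : ∀ c ∈ C, G.neighborSet c ∩ W ⊆ C ∪ S := by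
    rintro c hc z ⟨hcz, hzW⟩
    by_cases hzC : z ∈ C
    · exact Or.inl hzC
    · exact Or.inr ⟨hzW, hzC, c, hc, hcz.symm⟩
  have hssubset : C ∪ S ⊂ W := by
    refine (Set.ssubset_iff_of_subset (Set.union_subset (fun c hc => (hCW hc).1)
      fun s hs => hs.1)).mpr ⟨v, hv, ?_⟩
    rintro (hvC | hvS)
    · exact (hCW hvC).2 (Or.inl rfl)
    · exact absurd rfl (hSN v hvS).ne
  obtain ⟨u, ⟨huC | huS, huS'⟩, hu⟩ := exists_isSimplicialIn_not_mem_of_isClique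
    (ih _ hssubset) hS fun h => (h (Or.inl hwC)).2.1 hwC
  · exact ⟨u, hCW huC, hu.of_neighborSet_inter_subset (hnbhd u huC)⟩
  · exact absurd huS huS'

theorem IsChordal.exists_isSimplicialIn_not_mem_closedNeighborSet [Finite V] (hG : IsChordal G)
    (W : Set V) {v : V} (hv : v ∈ W) (hvW : ¬W ⊆ G.closedNeighborSet v) :
    ∃ u ∈ W \ G.closedNeighborSet v, G.IsSimplicialIn W u := by
  induction W using WellFoundedLT.induction generalizing v with
  | _ W ih => exact hG.exists_isSimplicialIn_of_ssubset (fun W' hW' _ => ih W' hW') hv hvW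

end

/-- Every chordal graph with at least one vertex has a simplicial vertex, i.e. a
vertex whose neighborhood is a clique. -/
theorem chordal_exists_simplicial {V : Type*} [Fintype V] [Nonempty V]
    (G : SimpleGraph V) (hG : IsChordal G) :
    ∃ v : V, G.IsClique (G.neighborSet v) := by
  obtain ⟨u, -, hu⟩ := exists_isSimplicialIn_not_mem_of_isClique
    (fun _ hv hvW => hG.exists_isSimplicialIn_not_mem_closedNeighborSet Set.univ hv hvW)
    G.isClique_empty (by simp)
  exact ⟨u, by simpa [IsSimplicialIn] using hu⟩
end

section
/- Fixing the shared variables decomposes the tree-structured problem: let blocks B_1, ..., B_k with variable index sets S_1, ..., S_k be arranged so that their intersection graph is a tree T, any variable belongs to at most two blocks, and no variable belongs to three distinct blocks. Then for any node r of T with parent p_r, fixing the values of the variables indexed by S_{p_r} ∩ S_r splits the feasible optimization over all remaining variables into two independent optimization problems: one over the blocks in the subtree T_r rooted at r and one over the blocks in T - T_r; in particular the optimal value of the whole problem (with the shared variables fixed) equals the sum of the optimal values of the two subproblems. -/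
open scoped BigOperators

/-- Tree-structured block decomposition: binary variables indexed by `ν`, linear
constraints indexed by `μ` (constraint `i` is `∑ j, a i j * x j ≤ b i`), grouped into
blocks indexed by `β` with variable sets `S` and constraint sets `U`.  The `U r`
partition the constraints, no variable lies in three distinct blocks, and the
intersection graph of the blocks is a tree `T`.  Fix an adjacent pair `p` (parent)
and `r`, and fix an assignment `z` of the shared variables `S p ∩ S r`.  Let `A` be
the set of variables of the blocks in the subtree `T_r` (the component of `r` after
deleting the edge `(p, r)`).  Then the problem splits into two independent problems:
a point is feasible iff it is feasible for the subtree-side constraints and for the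
other-side constraints, the objective splits as the sum of the `A`-part and the
complement part, and (provided both subproblems are feasible) the optimal value of
the whole problem with the shared variables fixed equals the sum of the optimal
values of the two subproblems. -/
theorem tree_block_decomposition
    {ν μ β : Type*} [Fintype ν] [Fintype μ]
    (T : SimpleGraph β) (hT : T.IsTree)
    (S : β → Set ν) (U : β → Set μ)
    (hScover : ∀ j : ν, ∃ q, j ∈ S q)
    (hUcover : ∀ i : μ, ∃ q, i ∈ U q)
    (hUdisj : ∀ q1 q2, q1 ≠ q2 → U q1 ∩ U q2 = ∅)
    (htriple : ∀ q1 q2 q3, q1 ≠ q2 → q1 ≠ q3 → q2 ≠ q3 → S q1 ∩ S q2 ∩ S q3 = ∅)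
    (hadj : ∀ q1 q2, T.Adj q1 q2 ↔ q1 ≠ q2 ∧ (S q1 ∩ S q2).Nonempty)
    (a : μ → ν → ℝ) (b : μ → ℝ) (c : ν → ℝ)
    (hsupp : ∀ (i : μ) (q : β) (j : ν), i ∈ U q → j ∉ S q → a i j = 0)
    (p r : β) (hpr : T.Adj p r)
    (z : ν → ℕ) :
    -- the subtree side of the cut, its variables, and the three feasible sets
    ∀ Dr A Feas FeasA FeasB objFull objA objB,
      Dr = {q : β | (T.deleteEdges {s(p, r)}).Reachable q r} →
      A = {j : ν | ∃ q ∈ Dr, j ∈ S q} →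
      Feas = {x : ν → ℕ | (∀ j, x j ≤ 1) ∧ (∀ j ∈ S p ∩ S r, x j = z j) ∧
        ∀ i : μ, ∑ j, a i j * (x j : ℝ) ≤ b i} →
      FeasA = {x : ν → ℕ | (∀ j, x j ≤ 1) ∧ (∀ j ∈ S p ∩ S r, x j = z j) ∧
        ∀ i : μ, (∃ q ∈ Dr, i ∈ U q) → ∑ j, a i j * (x j : ℝ) ≤ b i} →
      FeasB = {x : ν → ℕ | (∀ j, x j ≤ 1) ∧ (∀ j ∈ S p ∩ S r, x j = z j) ∧
        ∀ i : μ, (∃ q ∉ Dr, i ∈ U q) → ∑ j, a i j * (x j : ℝ) ≤ b i} →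
      objFull = (fun x : ν → ℕ => ∑ j, c j * (x j : ℝ)) →
      objA = (fun x : ν → ℕ => ∑ᶠ j ∈ A, c j * (x j : ℝ)) →
      objB = (fun x : ν → ℕ => ∑ᶠ j ∈ Aᶜ, c j * (x j : ℝ)) →
      (∀ x, x ∈ Feas ↔ x ∈ FeasA ∧ x ∈ FeasB) ∧
      (∀ x, objFull x = objA x + objB x) ∧
      (FeasA.Nonempty → FeasB.Nonempty →
        sSup (objFull '' Feas) = sSup (objA '' FeasA) + sSup (objB '' FeasB)) := by
  intro Dr A Feas FeasA FeasB objFull objA objB hDr hA hFeas hFA hFB hOF hOA hOB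
  classical
  have hrDr : r ∈ Dr := by rw [hDr]; exact SimpleGraph.Reachable.refl r
  -- cut lemma
  have hcut : ∀ q q', q ∉ Dr → q' ∈ Dr → T.Adj q q' → q = p ∧ q' = r := by
    intro q q' hq hq' hadjq
    by_cases he : s(q, q') = s(p, r)
    · rcases Sym2.eq_iff.mp he with ⟨h1, h2⟩ | ⟨h1, h2⟩
      · exact ⟨h1, h2⟩
      · exact absurd (h1 ▸ hrDr) hq
    · exfalso
      apply hq
      rw [hDr] at hq' ⊢
      refine SimpleGraph.Reachable.trans (SimpleGraph.Adj.reachable ?_) hq'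
      simp only [SimpleGraph.deleteEdges_adj, Set.mem_singleton_iff]
      exact ⟨hadjq, he⟩
  -- crossing variables are shared
  have hcross : ∀ (q : β) (j : ν), q ∉ Dr → j ∈ S q → j ∈ A → j ∈ S p ∩ S r := by
    intro q j hq hjq hjA
    rw [hA] at hjA
    obtain ⟨q', hq', hjq'⟩ := hjA
    have hne : q ≠ q' := by rintro rfl; exact hq hq'
    have hadjq : T.Adj q q' := (hadj q q').mpr ⟨hne, ⟨j, hjq, hjq'⟩⟩
    obtain ⟨h1, h2⟩ := hcut q q' hq hq' hadjq
    exact ⟨h1 ▸ hjq, h2 ▸ hjq'⟩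
  -- feasibility split
  have hsplit : ∀ x, x ∈ Feas ↔ x ∈ FeasA ∧ x ∈ FeasB := by
    intro x
    rw [hFeas, hFA, hFB]
    constructor
    · rintro ⟨h1, h2, h3⟩
      exact ⟨⟨h1, h2, fun i _ => h3 i⟩, ⟨h1, h2, fun i _ => h3 i⟩⟩
    · rintro ⟨⟨h1, h2, h3⟩, ⟨_, _, h4⟩⟩
      refine ⟨h1, h2, fun i => ?_⟩
      obtain ⟨q, hq⟩ := hUcover i
      by_cases hqDr : q ∈ Dr
      · exact h3 i ⟨q, hqDr, hq⟩
      · exact h4 i ⟨q, hqDr, hq⟩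
  -- objective split
  have hobj : ∀ x, objFull x = objA x + objB x := by
    intro x
    rw [hOF, hOA, hOB]
    have hAfin : A.Finite := Set.toFinite A
    have := finsum_mem_union (f := fun j => c j * (x j : ℝ))
      (disjoint_compl_right (a := A)) hAfin (Set.toFinite Aᶜ)
    rw [Set.union_compl_self] at this
    rw [← this, finsum_mem_univ, finsum_eq_sum_of_fintype]
  refine ⟨hsplit, hobj, ?_⟩
  -- finiteness of the feasible sets
  have hbox : {x : ν → ℕ | ∀ j, x j ≤ 1}.Finite := by
    have : {x : ν → ℕ | ∀ j, x j ≤ 1} ⊆ Set.pi Set.univ (fun _ : ν => Set.Iic 1) := by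
      intro x hx j _; exact hx j
    exact Set.Finite.subset (Set.Finite.pi fun _ => Set.finite_Iic 1) this
  have hFeasFin : Feas.Finite := by
    refine hbox.subset ?_
    rw [hFeas]; rintro x ⟨h1, -, -⟩; exact h1
  have hFAFin : FeasA.Finite := by
    refine hbox.subset ?_
    rw [hFA]; rintro x ⟨h1, -, -⟩; exact h1
  have hFBFin : FeasB.Finite := by
    refine hbox.subset ?_
    rw [hFB]; rintro x ⟨h1, -, -⟩; exact h1
  -- combining lemma
  have hcomb : ∀ x ∈ FeasA, ∀ y ∈ FeasB,
      ∃ w ∈ Feas, objA w = objA x ∧ objB w = objB y := by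
    intro x hx y hy
    rw [hFA] at hx; rw [hFB] at hy
    obtain ⟨hx1, hx2, hx3⟩ := hx
    obtain ⟨hy1, hy2, hy3⟩ := hy
    set w : ν → ℕ := fun j => if j ∈ A then x j else y j with hw
    have hwA : ∀ j ∈ A, w j = x j := fun j hj => if_pos hj
    have hwB : ∀ j ∈ Aᶜ, w j = y j := fun j hj => if_neg hj
    refine ⟨w, ?_, ?_, ?_⟩
    · rw [hFeas]
      refine ⟨fun j => ?_, fun j hj => ?_, fun i => ?_⟩
      · by_cases hj : j ∈ A
        · rw [hwA j hj]; exact hx1 j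
        · rw [hwB j hj]; exact hy1 j
      · by_cases hjA : j ∈ A
        · rw [hwA j hjA]; exact hx2 j hj
        · rw [hwB j hjA]; exact hy2 j hj
      · obtain ⟨q, hq⟩ := hUcover i
        by_cases hqDr : q ∈ Dr
        · have : ∑ j, a i j * (w j : ℝ) = ∑ j, a i j * (x j : ℝ) := by
            refine Finset.sum_congr rfl fun j _ => ?_
            by_cases hjS : j ∈ S q
            · have hjA : j ∈ A := by rw [hA]; exact ⟨q, hqDr, hjS⟩
              rw [hwA j hjA]
            · rw [hsupp i q j hq hjS]; ring
          rw [this]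
          exact hx3 i ⟨q, hqDr, hq⟩
        · have : ∑ j, a i j * (w j : ℝ) = ∑ j, a i j * (y j : ℝ) := by
            refine Finset.sum_congr rfl fun j _ => ?_
            by_cases hjS : j ∈ S q
            · by_cases hjA : j ∈ A
              · have hshared := hcross q j hqDr hjS hjA
                rw [hwA j hjA, hx2 j hshared, ← hy2 j hshared]
              · rw [hwB j hjA]
            · rw [hsupp i q j hq hjS]; ring
          rw [this]
          exact hy3 i ⟨q, hqDr, hq⟩
    · rw [hOA]
      exact finsum_mem_congr rfl fun j hj => by rw [hwA j hj]
    · rw [hOB]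
      exact finsum_mem_congr rfl fun j hj => by rw [hwB j hj]
  intro hAne hBne
  have hImgAfin : (objA '' FeasA).Finite := hFAFin.image _
  have hImgBfin : (objB '' FeasB).Finite := hFBFin.image _
  have hImgFfin : (objFull '' Feas).Finite := hFeasFin.image _
  have hImgAne : (objA '' FeasA).Nonempty := hAne.image _
  have hImgBne : (objB '' FeasB).Nonempty := hBne.image _
  obtain ⟨x0, hx0⟩ := hAne
  obtain ⟨y0, hy0⟩ := hBne
  obtain ⟨w0, hw0, -, -⟩ := hcomb x0 hx0 y0 hy0
  have hFne : Feas.Nonempty := ⟨w0, hw0⟩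
  apply le_antisymm
  · apply csSup_le (hFne.image _)
    rintro v ⟨x, hx, rfl⟩
    obtain ⟨hxA, hxB⟩ := (hsplit x).mp hx
    rw [hobj x]
    exact add_le_add (le_csSup hImgAfin.bddAbove ⟨x, hxA, rfl⟩)
      (le_csSup hImgBfin.bddAbove ⟨x, hxB, rfl⟩)
  · obtain ⟨x, hx, hxval⟩ := hImgAne.csSup_mem hImgAfin
    obtain ⟨y, hy, hyval⟩ := hImgBne.csSup_mem hImgBfin
    obtain ⟨w, hwF, hwA, hwB⟩ := hcomb x hx y hy
    rw [← hxval, ← hyval, ← hwA, ← hwB, ← hobj w]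
    exact le_csSup hImgFfin.bddAbove ⟨w, hwF, rfl⟩
end
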